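/- arXiv:1310.3595 — 4 statements merged into one kernel-verified Lean document; each statement's English description precedes it below -/
import Mathlib

section
/- Consider a discrete-time switched linear system as in the context, and set c := sqrt( λ_max(Σ_{i ∈ 𝒫} P_i) / min_{i ∈ 𝒫} λ_min(P_i) ), where λ_max and λ_min denote the largest and smallest eigenvalues of a real symmetric matrix. Then for every initial condition x₀ ∈ ℝ^d and every t ∈ ℕ, the solution x (with x(0) = x₀, x(t+1) = A_{σ(t)} x(t)) satisfies ‖x(t)‖ ≤ c ‖x₀‖ · ( (∏_{s=0}^{t−1} λ_{σ(s)}) · (∏_{s < t, σ(s) ≠ σ(s+1)} μ_{σ(s) σ(s+1)}) )^{1/2}, where ‖·‖ is the Euclidean norm on ℝ^d. -/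
/-!
Each `V_i` is a norm squared up to constants: `λ_min(P_i) ‖ξ‖² ≤ V_i(ξ) ≤ λ_max(Σ_j P_j) ‖ξ‖²`.
Along the trajectory the active function `V_{σ(t)}` grows by at most the factor `λ_{σ(t)}` per step
and by `μ_{σ(t)σ(t+1)}` at each switch, so `V_{σ(t)}(x(t))` is at most the switching gain times
`V_{σ(0)}(x₀)`; sandwiching with the two norm bounds and taking square roots gives the estimate.
-/

open Filter Matrix

/-- The quadratic Lyapunov-like function `V_P(z) = ⟨P z, z⟩` on `ℝ^d`. -/
noncomputable def lyap {d : ℕ} (P : Matrix (Fin d) (Fin d) ℝ)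
    (z : EuclideanSpace ℝ (Fin d)) : ℝ :=
  (inner ℝ (Matrix.toEuclideanLin P z) z : ℝ)

/-- The largest eigenvalue of a real symmetric matrix (junk value `0` otherwise). -/
noncomputable def symmLamMax {d : ℕ} (M : Matrix (Fin d) (Fin d) ℝ) : ℝ :=
  if h : M.IsHermitian then ⨆ i, h.eigenvalues i else 0

/-- The smallest eigenvalue of a real symmetric matrix (junk value `0` otherwise). -/
noncomputable def symmLamMin {d : ℕ} (M : Matrix (Fin d) (Fin d) ℝ) : ℝ :=
  if h : M.IsHermitian then ⨅ i, h.eigenvalues i else 0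

open scoped MatrixOrder

namespace Matrix.IsHermitian

variable {n : Type*} [Fintype n] [DecidableEq n] {M : Matrix n n ℝ}

theorem dotProduct_mulVec_le_iSup_eigenvalues_mul (hM : M.IsHermitian) (z : n → ℝ) :
    z ⬝ᵥ (M *ᵥ z) ≤ (⨆ i, hM.eigenvalues i) * (z ⬝ᵥ z) := by
  have hle : M ≤ algebraMap ℝ _ (⨆ i, hM.eigenvalues i) := by
    refine le_algebraMap_of_spectrum_le (fun r hr => ?_) hM.isSelfAdjoint
    obtain ⟨i, rfl⟩ := hM.spectrum_real_eq_range_eigenvalues ▸ hr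
    exact le_ciSup (Set.finite_range _).bddAbove i
  have := (Matrix.le_iff.mp hle).dotProduct_mulVec_nonneg z
  simpa [sub_mulVec, dotProduct_sub, Algebra.algebraMap_eq_smul_one, smul_mulVec] using this

theorem iInf_eigenvalues_mul_le_dotProduct_mulVec (hM : M.IsHermitian) (z : n → ℝ) :
    (⨅ i, hM.eigenvalues i) * (z ⬝ᵥ z) ≤ z ⬝ᵥ (M *ᵥ z) := by
  have hle : algebraMap ℝ _ (⨅ i, hM.eigenvalues i) ≤ M := by
    refine algebraMap_le_of_le_spectrum (fun r hr => ?_) hM.isSelfAdjoint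
    obtain ⟨i, rfl⟩ := hM.spectrum_real_eq_range_eigenvalues ▸ hr
    exact ciInf_le (Set.finite_range _).bddBelow i
  have := (Matrix.le_iff.mp hle).dotProduct_mulVec_nonneg z
  simpa [sub_mulVec, dotProduct_sub, Algebra.algebraMap_eq_smul_one, smul_mulVec] using this

end Matrix.IsHermitian

lemma EuclideanSpace.norm_sq_eq_dotProduct {n : Type*} [Fintype n] (z : EuclideanSpace ℝ n) :
    ‖z‖ ^ 2 = z.ofLp ⬝ᵥ z.ofLp := by
  rw [← real_inner_self_eq_norm_sq, EuclideanSpace.inner_eq_star_dotProduct, star_trivial]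

section Lyap

variable {d : ℕ}

lemma lyap_eq_dotProduct (P : Matrix (Fin d) (Fin d) ℝ) (z : EuclideanSpace ℝ (Fin d)) :
    lyap P z = z.ofLp ⬝ᵥ (P *ᵥ z.ofLp) := by
  simp [lyap, EuclideanSpace.inner_eq_star_dotProduct]

lemma lyap_nonneg {P : Matrix (Fin d) (Fin d) ℝ} (hP : P.PosSemidef)
    (z : EuclideanSpace ℝ (Fin d)) : 0 ≤ lyap P z := by
  simpa [lyap_eq_dotProduct] using hP.dotProduct_mulVec_nonneg z.ofLp

lemma lyap_sum {ι : Type*} (s : Finset ι) (P : ι → Matrix (Fin d) (Fin d) ℝ)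
    (z : EuclideanSpace ℝ (Fin d)) : lyap (∑ i ∈ s, P i) z = ∑ i ∈ s, lyap (P i) z := by
  simp only [lyap_eq_dotProduct, sum_mulVec, dotProduct_sum]

lemma lyap_le_symmLamMax_mul_norm_sq {M : Matrix (Fin d) (Fin d) ℝ} (hM : M.IsHermitian)
    (z : EuclideanSpace ℝ (Fin d)) : lyap M z ≤ symmLamMax M * ‖z‖ ^ 2 := by
  rw [symmLamMax, dif_pos hM, lyap_eq_dotProduct, EuclideanSpace.norm_sq_eq_dotProduct]
  exact hM.dotProduct_mulVec_le_iSup_eigenvalues_mul _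

lemma symmLamMin_mul_norm_sq_le_lyap {M : Matrix (Fin d) (Fin d) ℝ} (hM : M.IsHermitian)
    (z : EuclideanSpace ℝ (Fin d)) : symmLamMin M * ‖z‖ ^ 2 ≤ lyap M z := by
  rw [symmLamMin, dif_pos hM, lyap_eq_dotProduct, EuclideanSpace.norm_sq_eq_dotProduct]
  exact hM.iInf_eigenvalues_mul_le_dotProduct_mulVec _

lemma symmLamMin_pos [NeZero d] {P : Matrix (Fin d) (Fin d) ℝ} (hP : P.PosDef) :
    0 < symmLamMin P := by
  obtain ⟨i, hi⟩ := exists_eq_ciInf_of_finite (f := hP.1.eigenvalues)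
  rw [symmLamMin, dif_pos hP.1, ← hi]
  exact hP.eigenvalues_pos i

lemma lyap_le_lyap_sum {ι : Type*} [Fintype ι] {P : ι → Matrix (Fin d) (Fin d) ℝ}
    (hP : ∀ i, (P i).PosSemidef) (j : ι) (z : EuclideanSpace ℝ (Fin d)) :
    lyap (P j) z ≤ lyap (∑ i, P i) z := by
  rw [lyap_sum]
  exact Finset.single_le_sum (fun i _ => lyap_nonneg (hP i) z) (Finset.mem_univ j)

end Lyap

section Switching

variable {ι E : Type*} [DecidableEq ι] (σ : ℕ → ι) (lam : ι → ℝ) (mu : ι → ι → ℝ)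

def switchingGain (t : ℕ) : ℝ :=
  (∏ s ∈ Finset.range t, lam (σ s)) *
    ∏ s ∈ (Finset.range t).filter (fun s => σ s ≠ σ (s + 1)), mu (σ s) (σ (s + 1))

lemma switchingGain_zero : switchingGain σ lam mu 0 = 1 := by
  simp [switchingGain]

lemma switchingGain_succ (t : ℕ) :
    switchingGain σ lam mu (t + 1) = (if σ t ≠ σ (t + 1) then mu (σ t) (σ (t + 1)) else 1) *
      lam (σ t) * switchingGain σ lam mu t := by
  simp only [switchingGain, Finset.prod_filter, Finset.prod_range_succ]
  ring

variable {σ lam mu}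

lemma switchingGain_nonneg (hlam : ∀ i, 0 ≤ lam i) (hmu : ∀ i j, 0 ≤ mu i j) (t : ℕ) :
    0 ≤ switchingGain σ lam mu t :=
  mul_nonneg (Finset.prod_nonneg fun _ _ => hlam _) (Finset.prod_nonneg fun _ _ => hmu _ _)

theorem lyapunov_le_switchingGain_mul {V : ι → E → ℝ} {f : ι → E → E}
    (hlam : ∀ i, 0 ≤ lam i) (hV : ∀ i ξ, V i (f i ξ) ≤ lam i * V i ξ)
    (hmu0 : ∀ i j, 0 ≤ mu i j) (hmu : ∀ i j ξ, V j ξ ≤ mu i j * V i ξ)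
    {x : ℕ → E} (hx : ∀ t, x (t + 1) = f (σ t) (x t)) (t : ℕ) :
    V (σ t) (x t) ≤ switchingGain σ lam mu t * V (σ 0) (x 0) := by
  induction t with
  | zero => rw [switchingGain_zero, one_mul]
  | succ t ih =>
    set c := if σ t ≠ σ (t + 1) then mu (σ t) (σ (t + 1)) else 1
    have hc : 0 ≤ c := by unfold c; split_ifs <;> simp [hmu0]
    have hswitch : V (σ (t + 1)) (x (t + 1)) ≤ c * V (σ t) (x (t + 1)) := by
      unfold c; split_ifs with h
      · exact hmu _ _ _
      · rw [not_not.mp h, one_mul]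
    calc V (σ (t + 1)) (x (t + 1))
        ≤ c * V (σ t) (x (t + 1)) := hswitch
      _ ≤ c * (lam (σ t) * V (σ t) (x t)) := by
        rw [hx]; exact mul_le_mul_of_nonneg_left (hV _ _) hc
      _ ≤ c * (lam (σ t) * (switchingGain σ lam mu t * V (σ 0) (x 0))) := by gcongr; exact hlam _
      _ = switchingGain σ lam mu (t + 1) * V (σ 0) (x 0) := by rw [switchingGain_succ]; ring

end Switching

lemma le_sqrt_div_mul_mul_sqrt {a b m M G : ℝ} (hm : 0 < m) (hG : 0 ≤ G) (hb : 0 ≤ b)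
    (h : m * a ^ 2 ≤ G * (M * b ^ 2)) : a ≤ √(M / m) * b * √G := by
  rw [← Real.sqrt_sq hb, ← Real.sqrt_mul' _ (sq_nonneg b), ← Real.sqrt_mul' _ hG]
  refine Real.le_sqrt_of_sq_le ?_
  rw [div_mul_eq_mul_div, div_mul_eq_mul_div, le_div_iff₀ hm]
  linarith

theorem switched_system_norm_bound_general
    {d : ℕ} {ι : Type*} [Fintype ι] [DecidableEq ι]
    (A Pm : ι → Matrix (Fin d) (Fin d) ℝ)
    (hP : ∀ i, (Pm i).PosDef)
    (lam : ι → ℝ) (hlam : ∀ i, 0 < lam i)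
    (hV : ∀ i (ξ : EuclideanSpace ℝ (Fin d)),
      lyap (Pm i) (Matrix.toEuclideanLin (A i) ξ) ≤ lam i * lyap (Pm i) ξ)
    (mu : ι → ι → ℝ) (hmupos : ∀ i j, 0 < mu i j)
    (hmu : ∀ i j (ξ : EuclideanSpace ℝ (Fin d)),
      lyap (Pm j) ξ ≤ mu i j * lyap (Pm i) ξ)
    (σ : ℕ → ι)
    (x₀ : EuclideanSpace ℝ (Fin d)) (x : ℕ → EuclideanSpace ℝ (Fin d))
    (hx0 : x 0 = x₀)
    (hxrec : ∀ t, x (t + 1) = Matrix.toEuclideanLin (A (σ t)) (x t))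
    (t : ℕ) :
    ‖x t‖ ≤
      Real.sqrt (symmLamMax (∑ i, Pm i) / ⨅ i, symmLamMin (Pm i)) * ‖x₀‖ *
        Real.sqrt ((∏ s ∈ Finset.range t, lam (σ s)) *
          ∏ s ∈ (Finset.range t).filter (fun s => σ s ≠ σ (s + 1)), mu (σ s) (σ (s + 1))) := by
  obtain rfl | _ := eq_zero_or_neZero d
  · rw [Subsingleton.elim (x t) 0, norm_zero]
    positivity
  have : Nonempty ι := ⟨σ 0⟩
  have hmin : 0 < ⨅ i, symmLamMin (Pm i) := by
    obtain ⟨i, hi⟩ := exists_eq_ciInf_of_finite (f := fun i => symmLamMin (Pm i))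
    exact hi ▸ symmLamMin_pos (hP i)
  have hsum : (∑ i, Pm i).PosSemidef := posSemidef_sum _ fun i _ => (hP i).posSemidef
  have hgain := switchingGain_nonneg (σ := σ) (fun i => (hlam i).le) (fun i j => (hmupos i j).le) t
  refine le_sqrt_div_mul_mul_sqrt hmin hgain (norm_nonneg _) ?_
  calc (⨅ i, symmLamMin (Pm i)) * ‖x t‖ ^ 2
      ≤ symmLamMin (Pm (σ t)) * ‖x t‖ ^ 2 := by
        gcongr
        exact ciInf_le (Set.finite_range _).bddBelow _
    _ ≤ lyap (Pm (σ t)) (x t) := symmLamMin_mul_norm_sq_le_lyap (hP _).1 _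
    _ ≤ switchingGain σ lam mu t * lyap (Pm (σ 0)) x₀ :=
        hx0 ▸ lyapunov_le_switchingGain_mul (fun i => (hlam i).le) hV (fun i j => (hmupos i j).le)
          hmu hxrec t
    _ ≤ switchingGain σ lam mu t * (symmLamMax (∑ i, Pm i) * ‖x₀‖ ^ 2) := by
        gcongr
        exact (lyap_le_lyap_sum (fun i => (hP i).posSemidef) _ _).trans
          (lyap_le_symmLamMax_mul_norm_sq hsum.1 _)

/-- Norm bound along solutions of the switched linear system:
`‖x(t)‖ ≤ c ‖x₀‖ (∏_{s<t} λ_{σ(s)} · ∏_{s<t, σ(s)≠σ(s+1)} μ_{σ(s)σ(s+1)})^{1/2}` with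
`c = sqrt(λ_max(Σ_i P_i)/min_i λ_min(P_i))`. -/
theorem switched_system_norm_bound
    {d : ℕ} {ι : Type*} [Fintype ι] [DecidableEq ι] [Nonempty ι]
    (A Pm : ι → Matrix (Fin d) (Fin d) ℝ)
    (hP : ∀ i, (Pm i).PosDef)
    (lam : ι → ℝ) (hlam : ∀ i, 0 < lam i)
    (hV : ∀ i (ξ : EuclideanSpace ℝ (Fin d)),
      lyap (Pm i) (Matrix.toEuclideanLin (A i) ξ) ≤ lam i * lyap (Pm i) ξ)
    (mu : ι → ι → ℝ) (hmupos : ∀ i j, 0 < mu i j)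
    (hmu : ∀ i j (ξ : EuclideanSpace ℝ (Fin d)),
      lyap (Pm j) ξ ≤ mu i j * lyap (Pm i) ξ)
    (σ : ℕ → ι)
    (x₀ : EuclideanSpace ℝ (Fin d)) (x : ℕ → EuclideanSpace ℝ (Fin d))
    (hx0 : x 0 = x₀)
    (hxrec : ∀ t, x (t + 1) = Matrix.toEuclideanLin (A (σ t)) (x t))
    (t : ℕ) :
    ‖x t‖ ≤
      Real.sqrt (symmLamMax (∑ i, Pm i) / ⨅ i, symmLamMin (Pm i)) * ‖x₀‖ *
        Real.sqrt ((∏ s ∈ Finset.range t, lam (σ s)) *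
          ∏ s ∈ (Finset.range t).filter (fun s => σ s ≠ σ (s + 1)), mu (σ s) (σ (s + 1))) :=
  switched_system_norm_bound_general A Pm hP lam hlam hV mu hmupos hmu σ x₀ x hx0 hxrec t
end

section
/- Let A ∈ ℝ^{d×d} be a Schur stable matrix, i.e., every complex eigenvalue of A has modulus strictly less than 1. Then there exist a symmetric positive definite matrix P ∈ ℝ^{d×d} and a constant λ with 0 < λ < 1 such that ⟨P (A x), A x⟩ ≤ λ ⟨P x, x⟩ for all x ∈ ℝ^d. -/
/-!
Let `ρ < 1` be the spectral radius of the complexification of `A` and fix `ρ < r < 1`. By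
Gelfand's formula `‖Aᴺ‖ < rᴺ` for some `N ≥ 1` (in the Frobenius norm, which complexification
preserves), so `|Aᴺ x|² ≤ tᴺ |x|²` with `t = r²`. The truncated Lyapunov sum
`P = ∑_{k<N} t⁻ᵏ (Aᵏ)ᵀ Aᵏ` is positive definite, and shifting the index of summation gives
`t⁻¹ ⟨P A x, A x⟩ + |x|² = ⟨P x, x⟩ + t⁻ᴺ |Aᴺ x|² ≤ ⟨P x, x⟩ + |x|²`.
-/

open Finset Filter
open scoped NNReal

namespace spectrum

-- Unlike `spectralRadius_lt_of_forall_lt`, this also covers trivial algebras such as `0 × 0`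
-- matrices, whose spectrum is empty.
theorem spectralRadius_lt_of_forall_lt_of_pos {𝕜 A : Type*} [NormedField 𝕜] [ProperSpace 𝕜]
    [NormedRing A] [NormedAlgebra 𝕜 A] [CompleteSpace A] (a : A) {r : ℝ≥0} (hr : 0 < r)
    (h : ∀ k ∈ spectrum 𝕜 a, ‖k‖₊ < r) : spectralRadius 𝕜 a < r := by
  rcases (spectrum 𝕜 a).eq_empty_or_nonempty with hempty | hne
  · simp [spectralRadius, hempty, hr]
  · exact spectralRadius_lt_of_forall_lt_of_nonempty hne h

theorem eventually_norm_pow_lt_pow {A : Type*} [NormedRing A] [NormedAlgebra ℂ A]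
    [CompleteSpace A] {a : A} {r : ℝ≥0} (h : spectralRadius ℂ a < r) :
    ∀ᶠ n : ℕ in atTop, ‖a ^ n‖ < r ^ n := by
  filter_upwards [(pow_nnnorm_pow_one_div_tendsto_nhds_spectralRadius a).eventually_lt_const h,
    eventually_ne_atTop 0] with n hn hn0
  rw [one_div, ENNReal.rpow_inv_lt_iff (by positivity), ENNReal.rpow_natCast] at hn
  exact_mod_cast hn

end spectrum

namespace Matrix

section Lyapunov

variable {n : Type*} [Fintype n] [DecidableEq n]

noncomputable def lyapunovSum (A : Matrix n n ℝ) (t : ℝ) (N : ℕ) : Matrix n n ℝ :=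
  ∑ k ∈ range N, t⁻¹ ^ k • ((A ^ k)ᵀ * A ^ k)

omit [DecidableEq n] in
theorem transpose_mul_self_mulVec_dotProduct {m R : Type*} [Fintype m] [CommSemiring R]
    (M : Matrix m n R) (x : n → R) : ((Mᵀ * M) *ᵥ x) ⬝ᵥ x = (M *ᵥ x) ⬝ᵥ (M *ᵥ x) := by
  rw [← mulVec_mulVec, dotProduct_comm, dotProduct_mulVec, vecMul_transpose]

theorem lyapunovSum_mulVec_dotProduct (A : Matrix n n ℝ) (t : ℝ) (N : ℕ) (x : n → ℝ) :
    (lyapunovSum A t N *ᵥ x) ⬝ᵥ x = ∑ k ∈ range N, t⁻¹ ^ k * ((A ^ k *ᵥ x) ⬝ᵥ (A ^ k *ᵥ x)) := by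
  simp only [lyapunovSum, sum_mulVec, sum_dotProduct, smul_mulVec, smul_dotProduct,
    transpose_mul_self_mulVec_dotProduct, smul_eq_mul]

theorem posDef_lyapunovSum (A : Matrix n n ℝ) {t : ℝ} (ht : 0 ≤ t) {N : ℕ} (hN : N ≠ 0) :
    (lyapunovSum A t N).PosDef := by
  obtain ⟨M, rfl⟩ := Nat.exists_eq_succ_of_ne_zero hN
  rw [lyapunovSum, sum_range_succ']
  refine PosDef.posSemidef_add (posSemidef_sum _ fun k _ => ?_) (by simpa using PosDef.one)
  simpa using (posSemidef_conjTranspose_mul_self (A ^ (k + 1))).smul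
    (pow_nonneg (inv_nonneg.2 ht) (k + 1))

theorem lyapunovSum_mulVec_mulVec_dotProduct (A : Matrix n n ℝ) (t : ℝ) (N : ℕ) (x : n → ℝ) :
    t⁻¹ * ((lyapunovSum A t N *ᵥ (A *ᵥ x)) ⬝ᵥ (A *ᵥ x)) + x ⬝ᵥ x
      = (lyapunovSum A t N *ᵥ x) ⬝ᵥ x + t⁻¹ ^ N * ((A ^ N *ᵥ x) ⬝ᵥ (A ^ N *ᵥ x)) := by
  set w : ℕ → ℝ := fun k => t⁻¹ ^ k * ((A ^ k *ᵥ x) ⬝ᵥ (A ^ k *ᵥ x))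
  have hshift : t⁻¹ * ((lyapunovSum A t N *ᵥ (A *ᵥ x)) ⬝ᵥ (A *ᵥ x))
      = ∑ k ∈ range N, w (k + 1) := by
    rw [lyapunovSum_mulVec_dotProduct, mul_sum]
    refine sum_congr rfl fun k _ => ?_
    simp only [w, mulVec_mulVec, ← pow_succ, pow_succ' t⁻¹, mul_assoc]
  have h0 : x ⬝ᵥ x = w 0 := by simp [w]
  rw [hshift, h0, lyapunovSum_mulVec_dotProduct, ← sum_range_succ', sum_range_succ]

theorem lyapunovSum_mulVec_mulVec_dotProduct_le (A : Matrix n n ℝ) {t : ℝ} (ht : 0 < t)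
    {N : ℕ} (hN : ∀ x, (A ^ N *ᵥ x) ⬝ᵥ (A ^ N *ᵥ x) ≤ t ^ N * (x ⬝ᵥ x)) (x : n → ℝ) :
    (lyapunovSum A t N *ᵥ (A *ᵥ x)) ⬝ᵥ (A *ᵥ x) ≤ t * ((lyapunovSum A t N *ᵥ x) ⬝ᵥ x) := by
  have hidentity := lyapunovSum_mulVec_mulVec_dotProduct A t N x
  have htail : t⁻¹ ^ N * ((A ^ N *ᵥ x) ⬝ᵥ (A ^ N *ᵥ x)) ≤ x ⬝ᵥ x := by
    rw [inv_pow, inv_mul_le_iff₀ (pow_pos ht N)]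
    exact hN x
  calc (lyapunovSum A t N *ᵥ (A *ᵥ x)) ⬝ᵥ (A *ᵥ x)
      = t * (t⁻¹ * ((lyapunovSum A t N *ᵥ (A *ᵥ x)) ⬝ᵥ (A *ᵥ x))) := by field_simp
    _ ≤ t * ((lyapunovSum A t N *ᵥ x) ⬝ᵥ x) := by gcongr; linarith

end Lyapunov

section Frobenius

attribute [local instance] frobeniusNormedAddCommGroup frobeniusNormedRing frobeniusNormedAlgebra

theorem frobenius_norm_toLp_mulVec {m n α : Type*} [Fintype m] [Fintype n] [RCLike α]
    (M : Matrix m n α) (v : n → α) : ‖WithLp.toLp 2 (M *ᵥ v)‖ ≤ ‖M‖ * ‖WithLp.toLp 2 v‖ := by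
  rw [← frobenius_norm_replicateCol (ι := Unit), ← frobenius_norm_replicateCol (ι := Unit),
    replicateCol_mulVec]
  exact frobenius_norm_mul _ _

theorem dotProduct_self_eq_norm_toLp_sq {n : Type*} [Fintype n] (v : n → ℝ) :
    v ⬝ᵥ v = ‖WithLp.toLp 2 v‖ ^ 2 := by
  rw [← real_inner_self_eq_norm_sq, EuclideanSpace.inner_toLp_toLp, star_trivial]

theorem frobenius_mulVec_dotProduct_le {m n : Type*} [Fintype m] [Fintype n]
    (M : Matrix m n ℝ) (v : n → ℝ) : (M *ᵥ v) ⬝ᵥ (M *ᵥ v) ≤ ‖M‖ ^ 2 * (v ⬝ᵥ v) := by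
  rw [dotProduct_self_eq_norm_toLp_sq, dotProduct_self_eq_norm_toLp_sq, ← mul_pow]
  exact pow_le_pow_left₀ (norm_nonneg _) (frobenius_norm_toLp_mulVec M v) 2

theorem frobenius_norm_map_algebraMap_real {m n : Type*} [Fintype m] [Fintype n]
    (M : Matrix m n ℝ) : ‖M.map (algebraMap ℝ ℂ)‖ = ‖M‖ :=
  frobenius_norm_map_eq M _ Complex.norm_real

theorem exists_pow_mulVec_dotProduct_le_of_spectrum {n : Type*} [Fintype n] [DecidableEq n]
    {A : Matrix n n ℝ} (hA : ∀ z ∈ spectrum ℂ (A.map (algebraMap ℝ ℂ)), ‖z‖ < 1) :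
    ∃ t : ℝ, 0 < t ∧ t < 1 ∧ ∃ N ≠ 0,
      ∀ x, (A ^ N *ᵥ x) ⬝ᵥ (A ^ N *ᵥ x) ≤ t ^ N * (x ⬝ᵥ x) := by
  have : CompleteSpace (Matrix n n ℂ) := FiniteDimensional.complete ℂ _
  have hρ : spectralRadius ℂ (A.map (algebraMap ℝ ℂ)) < 1 :=
    mod_cast spectrum.spectralRadius_lt_of_forall_lt_of_pos _ one_pos
      fun z hz => mod_cast hA z hz
  obtain ⟨r, hρr, hr1⟩ := ENNReal.lt_iff_exists_nnreal_btwn.mp hρ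
  have hr0 : (0 : ℝ) < r := mod_cast ENNReal.coe_pos.mp (bot_le.trans_lt hρr)
  obtain ⟨N, hnormC, hN⟩ := ((spectrum.eventually_norm_pow_lt_pow hρr).and
    (eventually_ne_atTop 0)).exists
  refine ⟨(r : ℝ) ^ 2, by positivity, pow_lt_one₀ hr0.le (mod_cast hr1) two_ne_zero, N, hN,
    fun x => ?_⟩
  have hnorm : ‖A ^ N‖ < (r : ℝ) ^ N := by
    rwa [← frobenius_norm_map_algebraMap_real, Matrix.map_pow _ (algebraMap ℝ ℂ)]
  calc (A ^ N *ᵥ x) ⬝ᵥ (A ^ N *ᵥ x) ≤ ‖A ^ N‖ ^ 2 * (x ⬝ᵥ x) :=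
        frobenius_mulVec_dotProduct_le _ x
    _ ≤ ((r : ℝ) ^ N) ^ 2 * (x ⬝ᵥ x) :=
        mul_le_mul_of_nonneg_right (pow_le_pow_left₀ (norm_nonneg _) hnorm.le 2)
          (by simpa using dotProduct_star_self_nonneg x)
    _ = ((r : ℝ) ^ 2) ^ N * (x ⬝ᵥ x) := by ring

end Frobenius

end Matrix

open Matrix

/-- For a Schur stable real matrix `A` (all complex eigenvalues of modulus `< 1`) there
exist a symmetric positive definite `P` and `0 < λ < 1` with
`⟨P (A x), A x⟩ ≤ λ ⟨P x, x⟩` for all `x`. -/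
theorem schur_stable_lyapunov {d : ℕ} (A : Matrix (Fin d) (Fin d) ℝ)
    (hA : ∀ z ∈ spectrum ℂ (A.map (algebraMap ℝ ℂ)), ‖z‖ < 1) :
    ∃ P : Matrix (Fin d) (Fin d) ℝ, P.PosDef ∧
      ∃ lam : ℝ, 0 < lam ∧ lam < 1 ∧
        ∀ x : Fin d → ℝ,
          P.mulVec (A.mulVec x) ⬝ᵥ A.mulVec x ≤ lam * (P.mulVec x ⬝ᵥ x) := by
  obtain ⟨t, ht0, ht1, N, hN, hdecay⟩ := exists_pow_mulVec_dotProduct_le_of_spectrum hA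
  exact ⟨lyapunovSum A t N, posDef_lyapunovSum A ht0.le hN, t, ht0, ht1,
    lyapunovSum_mulVec_mulVec_dotProduct_le A ht0 hdecay⟩
end

section
/- Consider a discrete-time switched linear system as in the context. Let τ ≥ 1 and let w : {0,…,τ} → 𝒫 be a closed walk, i.e., w(τ) = w(0). Define the counts over W: ρ_{kℓ}(W) := #{i < τ : w(i) = k, w(i+1) = ℓ} for ordered pairs k ≠ ℓ, and κ_j(W) := #{i < τ : w(i) = j}; set N(W) := Σ_{k≠ℓ} (ln μ_{kℓ}) ρ_{kℓ}(W) + Σ_{j ∈ 𝒫_U} (ln λ_j) κ_j(W) and D(W) := Σ_{j ∈ 𝒫_AS} |ln λ_j| κ_j(W). Suppose D(W) > 0 and N(W) < D(W). Define the periodic switching signal σ(t) := w(t mod τ). Then limsup_{t→∞} g₂(t)/g₁(t) = N(W)/D(W) < 1, where g₁ and g₂ are formed from σ as in the context. -/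
open Filter Matrix

/-- `ρ_{kℓ}(t)`: the number of transitions from `k` to `ℓ` before (and including) `t`. -/
def transCount {ι : Type*} [DecidableEq ι] (σ : ℕ → ι) (k l : ι) (t : ℕ) : ℕ :=
  ((Finset.Icc 1 t).filter fun s => σ (s - 1) = k ∧ σ s = l).card

/-- `κ_j(t)`: the number of time steps in `{0,…,t-1}` at which subsystem `j` is active. -/
def actCount {ι : Type*} [DecidableEq ι] (σ : ℕ → ι) (j : ι) (t : ℕ) : ℕ :=
  ((Finset.range t).filter fun s => σ s = j).card

/-- `g₁(t) = Σ_{j ∈ 𝒫_AS} |ln λ_j| κ_j(t)`. -/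
noncomputable def gOne {ι : Type*} [Fintype ι] [DecidableEq ι]
    (lam : ι → ℝ) (σ : ℕ → ι) (t : ℕ) : ℝ :=
  ∑ j ∈ Finset.univ.filter (fun j => lam j < 1), |Real.log (lam j)| * (actCount σ j t : ℝ)

/-- `g₂(t) = Σ_{k ≠ ℓ} (ln μ_{kℓ}) ρ_{kℓ}(t) + Σ_{j ∈ 𝒫_U} (ln λ_j) κ_j(t)`. -/
noncomputable def gTwo {ι : Type*} [Fintype ι] [DecidableEq ι]
    (lam : ι → ℝ) (mu : ι → ι → ℝ) (σ : ℕ → ι) (t : ℕ) : ℝ :=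
  (∑ k, ∑ l ∈ Finset.univ.filter (fun l => l ≠ k),
      Real.log (mu k l) * (transCount σ k l t : ℝ))
    + ∑ j ∈ Finset.univ.filter (fun j => 1 < lam j),
        Real.log (lam j) * (actCount σ j t : ℝ)

/-- `ρ_{kℓ}(W)`: number of steps of the walk `w` of length `τ` going from `k` to `ℓ`. -/
def walkTrans {ι : Type*} [DecidableEq ι] (w : ℕ → ι) (τ : ℕ) (k l : ι) : ℕ :=
  ((Finset.range τ).filter fun i => w i = k ∧ w (i + 1) = l).card

/-- `κ_j(W)`: number of indices `i < τ` with `w i = j`. -/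
def walkAct {ι : Type*} [DecidableEq ι] (w : ℕ → ι) (τ : ℕ) (j : ι) : ℕ :=
  ((Finset.range τ).filter fun i => w i = j).card

/-- `N(W) = Σ_{k≠ℓ} (ln μ_{kℓ}) ρ_{kℓ}(W) + Σ_{j ∈ 𝒫_U} (ln λ_j) κ_j(W)`. -/
noncomputable def walkN {ι : Type*} [Fintype ι] [DecidableEq ι]
    (lam : ι → ℝ) (mu : ι → ι → ℝ) (w : ℕ → ι) (τ : ℕ) : ℝ :=
  (∑ k, ∑ l ∈ Finset.univ.filter (fun l => l ≠ k),
      Real.log (mu k l) * (walkTrans w τ k l : ℝ))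
    + ∑ j ∈ Finset.univ.filter (fun j => 1 < lam j),
        Real.log (lam j) * (walkAct w τ j : ℝ)

/-- `D(W) = Σ_{j ∈ 𝒫_AS} |ln λ_j| κ_j(W)`. -/
noncomputable def walkD {ι : Type*} [Fintype ι] [DecidableEq ι]
    (lam : ι → ℝ) (w : ℕ → ι) (τ : ℕ) : ℝ :=
  ∑ j ∈ Finset.univ.filter (fun j => lam j < 1), |Real.log (lam j)| * (walkAct w τ j : ℝ)

/-!
Along the periodic signal, each block of `τ` steps adds exactly `D(W)` to `g₁` and `N(W)` to `g₂`;
closedness of the walk is what makes the wrap-around transition `w (τ - 1) → w 0` coincide with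
the walk's last step. Hence `g₁ t = t D / τ + O(1)` and `g₂ t = t N / τ + O(1)`, so `g₂ / g₁`
converges to `N / D`, which is then also its limsup.
-/

open Topology Finset

theorem Nat.count_add_of_periodic {p : ℕ → Prop} [DecidablePred p] {τ : ℕ}
    (hp : Function.Periodic p τ) (t : ℕ) :
    Nat.count p (t + τ) = Nat.count p t + Nat.count p τ := by
  rw [Nat.count_add']
  simp only [Nat.count_eq_card_filter_range, show ∀ k, p (k + τ) = p k from hp]

theorem tendsto_div_natCast_of_add_const {f : ℕ → ℝ} {τ : ℕ} {c : ℝ} (hτ : 0 < τ)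
    (hf : ∀ t, f (t + τ) = f t + c) :
    Tendsto (fun t => f t / t) atTop (𝓝 (c / τ)) := by
  -- the deviation from the line `t ↦ t c / τ` is `τ`-periodic, hence bounded
  set h : ℕ → ℝ := fun t => f t - t * (c / τ)
  have hper : Function.Periodic h τ := fun t => by
    simp only [h, hf]; push_cast; field_simp; ring
  have hbdd : ∀ t, |h t| ≤ ∑ r ∈ range τ, |h r| := fun t => by
    rw [← hper.map_mod_nat]
    exact single_le_sum (f := fun r => |h r|) (fun _ _ => abs_nonneg _)
      (mem_range.mpr (Nat.mod_lt t hτ))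
  have hdev : Tendsto (fun t => h t / t) atTop (𝓝 0) := by
    refine squeeze_zero_norm (fun t => ?_)
      (tendsto_const_div_atTop_nhds_zero_nat (∑ r ∈ range τ, |h r|))
    rw [Real.norm_eq_abs, abs_div, Nat.abs_cast]
    exact div_le_div_of_nonneg_right (hbdd t) (Nat.cast_nonneg t)
  rw [← zero_add (c / τ)]
  refine (hdev.add_const _).congr' ?_
  filter_upwards [eventually_ne_atTop 0] with t ht
  simp only [h]
  field_simp
  ring

section

variable {ι : Type*} [DecidableEq ι]

theorem actCount_eq_count (σ : ℕ → ι) (j : ι) (t : ℕ) :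
    actCount σ j t = Nat.count (fun s => σ s = j) t :=
  (Nat.count_eq_card_filter_range _ _).symm

theorem transCount_eq_count (σ : ℕ → ι) (k l : ι) (t : ℕ) :
    transCount σ k l t = Nat.count (fun s => σ s = k ∧ σ (s + 1) = l) t := by
  rw [Nat.count_eq_card_filter_range, transCount]
  refine card_nbij' (· - 1) (· + 1) ?_ ?_ ?_ ?_ <;> intro s hs <;>
    simp only [coe_filter, mem_Icc, mem_range, Set.mem_ofPred_eq] at hs ⊢
  · obtain ⟨⟨h1, h2⟩, hk, hl⟩ := hs
    refine ⟨by omega, hk, ?_⟩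
    rwa [Nat.sub_add_cancel h1]
  · exact ⟨by omega, hs.2⟩
  · omega
  · omega

theorem actCount_add_period {σ : ℕ → ι} {τ : ℕ} (hσ : Function.Periodic σ τ) (j : ι) (t : ℕ) :
    actCount σ j (t + τ) = actCount σ j t + actCount σ j τ := by
  simp only [actCount_eq_count]
  exact Nat.count_add_of_periodic (fun s => by simp only [hσ s]) t

theorem transCount_add_period {σ : ℕ → ι} {τ : ℕ} (hσ : Function.Periodic σ τ) (k l : ι)
    (t : ℕ) :
    transCount σ k l (t + τ) = transCount σ k l t + transCount σ k l τ := by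
  simp only [transCount_eq_count]
  refine Nat.count_add_of_periodic (fun s => ?_) t
  simp only [add_right_comm s τ 1, hσ s, hσ (s + 1)]

theorem actCount_eq_walkAct {σ w : ℕ → ι} {τ : ℕ} (hw : ∀ s < τ, σ s = w s) (j : ι) :
    actCount σ j τ = walkAct w τ j := by
  refine congrArg card (filter_congr fun s hs => ?_)
  rw [hw s (mem_range.mp hs)]

theorem transCount_eq_walkTrans {σ w : ℕ → ι} {τ : ℕ} (hw : ∀ s ≤ τ, σ s = w s) (k l : ι) :
    transCount σ k l τ = walkTrans w τ k l := by
  rw [transCount_eq_count, Nat.count_eq_card_filter_range]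
  refine congrArg card (filter_congr fun s hs => ?_)
  have hs := mem_range.mp hs
  rw [hw s hs.le, hw (s + 1) hs]

variable [Fintype ι]

theorem gOne_add_period (lam : ι → ℝ) {σ w : ℕ → ι} {τ : ℕ} (hσ : Function.Periodic σ τ)
    (hw : ∀ s < τ, σ s = w s) (t : ℕ) :
    gOne lam σ (t + τ) = gOne lam σ t + walkD lam w τ := by
  simp only [gOne, walkD, actCount_add_period hσ, actCount_eq_walkAct hw, ← sum_add_distrib]
  push_cast
  simp only [mul_add]

theorem gTwo_add_period (lam : ι → ℝ) (mu : ι → ι → ℝ) {σ w : ℕ → ι} {τ : ℕ}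
    (hσ : Function.Periodic σ τ) (hw : ∀ s ≤ τ, σ s = w s) (t : ℕ) :
    gTwo lam mu σ (t + τ) = gTwo lam mu σ t + walkN lam mu w τ := by
  simp only [gTwo, walkN, actCount_add_period hσ, transCount_add_period hσ,
    actCount_eq_walkAct fun s hs => hw s hs.le, transCount_eq_walkTrans hw]
  push_cast
  simp only [mul_add, sum_add_distrib]
  ring

end

theorem walk_mod_eq_of_le {ι : Type*} {w : ℕ → ι} {τ : ℕ} (hclosed : w τ = w 0) {s : ℕ}
    (hs : s ≤ τ) :
    w (s % τ) = w s := by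
  rcases hs.lt_or_eq with hs | rfl
  · rw [Nat.mod_eq_of_lt hs]
  · rw [Nat.mod_self, hclosed]

theorem periodic_signal_limsup_ratio_general
    {ι : Type*} [Fintype ι] [DecidableEq ι]
    (lam : ι → ℝ)
    (mu : ι → ι → ℝ)
    (τ : ℕ) (w : ℕ → ι) (hclosed : w τ = w 0)
    (hD : 0 < walkD lam w τ)
    (hND : walkN lam mu w τ < walkD lam w τ) :
    Filter.limsup
        (fun t => ((gTwo lam mu (fun s => w (s % τ)) t /
            gOne lam (fun s => w (s % τ)) t : ℝ) : EReal)) Filter.atTop =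
        ((walkN lam mu w τ / walkD lam w τ : ℝ) : EReal) ∧
      walkN lam mu w τ / walkD lam w τ < 1 := by
  set σ : ℕ → ι := fun s => w (s % τ)
  have hτ : 0 < τ := Nat.pos_of_ne_zero fun h => by simp [h, walkD, walkAct] at hD
  have hσ : Function.Periodic σ τ := fun s => by simp only [σ, Nat.add_mod_right]
  have hσw : ∀ s ≤ τ, σ s = w s := fun s => walk_mod_eq_of_le hclosed
  have hOne := tendsto_div_natCast_of_add_const hτ
    (gOne_add_period lam hσ fun s hs => hσw s hs.le)
  have hTwo := tendsto_div_natCast_of_add_const hτ (gTwo_add_period lam mu hσ hσw)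
  have hτℝ : (τ : ℝ) ≠ 0 := by positivity
  have hratio : Tendsto (fun t => gTwo lam mu σ t / gOne lam σ t) atTop
      (𝓝 (walkN lam mu w τ / walkD lam w τ)) := by
    rw [← div_div_div_cancel_right₀ hτℝ]
    refine (hTwo.div hOne (div_ne_zero hD.ne' hτℝ)).congr' ?_
    filter_upwards [eventually_ne_atTop 0] with t ht
    exact div_div_div_cancel_right₀ (Nat.cast_ne_zero.mpr ht) _ _
  exact ⟨(EReal.tendsto_coe.mpr hratio).limsup_eq, (div_lt_one hD).mpr hND⟩

/-- For the periodic switching signal obtained by repeating a closed walk `W` with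
`D(W) > 0` and `N(W) < D(W)`, one has `limsup g₂/g₁ = N(W)/D(W) < 1`. -/
theorem periodic_signal_limsup_ratio
    {d : ℕ} {ι : Type*} [Fintype ι] [DecidableEq ι] [Nonempty ι]
    (A Pm : ι → Matrix (Fin d) (Fin d) ℝ)
    (hP : ∀ i, (Pm i).PosDef)
    (lam : ι → ℝ) (hlam : ∀ i, 0 < lam i)
    (hV : ∀ i (ξ : EuclideanSpace ℝ (Fin d)),
      lyap (Pm i) (Matrix.toEuclideanLin (A i) ξ) ≤ lam i * lyap (Pm i) ξ)
    (mu : ι → ι → ℝ) (hmupos : ∀ i j, 0 < mu i j)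
    (hmu : ∀ i j (ξ : EuclideanSpace ℝ (Fin d)),
      lyap (Pm j) ξ ≤ mu i j * lyap (Pm i) ξ)
    (τ : ℕ) (hτ : 1 ≤ τ) (w : ℕ → ι) (hclosed : w τ = w 0)
    (hD : 0 < walkD lam w τ)
    (hND : walkN lam mu w τ < walkD lam w τ) :
    Filter.limsup
        (fun t => ((gTwo lam mu (fun s => w (s % τ)) t /
            gOne lam (fun s => w (s % τ)) t : ℝ) : EReal)) Filter.atTop =
        ((walkN lam mu w τ / walkD lam w τ : ℝ) : EReal) ∧
      walkN lam mu w τ / walkD lam w τ < 1 :=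
  periodic_signal_limsup_ratio_general lam mu τ w hclosed hD hND
end

section
/- Let 𝒫 be a finite set, E ⊆ 𝒫 × 𝒫 the edge set of a directed graph, 𝒫_AS, 𝒫_U ⊆ 𝒫 two disjoint subsets, and real weights ln μ_{kℓ} for (k,ℓ) ∈ E and |ln λ_j| > 0 for j ∈ 𝒫_AS, ln λ_j > 0 for j ∈ 𝒫_U. Suppose there exists f : E → ℝ such that: (i) for every vertex v ∈ 𝒫, Σ_{ℓ : (v,ℓ) ∈ E} f(v,ℓ) = Σ_{k : (k,v) ∈ E} f(k,v) (flow conservation); (ii) 0 ≤ f(e) ≤ 1 for every e ∈ E; (iii) Σ_{e ∈ E} f(e) ≥ 1; and (iv) Σ_{(k,ℓ) ∈ E} (ln μ_{kℓ}) f(k,ℓ) + Σ_{j ∈ 𝒫_U} (ln λ_j) Σ_{ℓ : (j,ℓ) ∈ E} f(j,ℓ) < Σ_{j ∈ 𝒫_AS} |ln λ_j| Σ_{ℓ : (j,ℓ) ∈ E} f(j,ℓ). Then there exists a circuit on G(𝒫,E), i.e., a closed walk w : {0,…,τ} → 𝒫 with τ ≥ 1, w(τ) = w(0), each step (w(i),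 w(i+1)) ∈ E, and the traversed edges (w(i), w(i+1)), i = 0,…,τ−1, pairwise distinct, such that Σ_{(k,ℓ) ∈ E} (ln μ_{kℓ}) ρ_{kℓ}(W) + Σ_{j ∈ 𝒫_U} (ln λ_j) κ_j(W) < Σ_{j ∈ 𝒫_AS} |ln λ_j| κ_j(W), where ρ_{kℓ}(W) := #{i < τ : w(i) = k, w(i+1) = ℓ} and κ_j(W) := #{i < τ : w(i) = j}. -/
open Finset

/-- Shift invariance of vertex counts along a closed walk. -/
lemma shift_card {ι : Type*} [DecidableEq ι] (τ : ℕ) (hτ : 1 ≤ τ) (w : ℕ → ι)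
    (hclose : w τ = w 0) (v : ι) :
    ((Finset.range τ).filter (fun i => w (i + 1) = v)).card
      = ((Finset.range τ).filter (fun i => w i = v)).card := by
  have hτ0 : 0 < τ := hτ
  apply Finset.card_bij (fun i _ => (i + 1) % τ)
  · intro a ha
    simp only [Finset.mem_filter, Finset.mem_range] at ha ⊢
    refine ⟨Nat.mod_lt _ hτ0, ?_⟩
    rcases lt_or_eq_of_le (Nat.succ_le_of_lt ha.1) with h | h
    · rw [Nat.mod_eq_of_lt h]; exact ha.2
    · have h' : a + 1 = τ := h
      rw [h', Nat.mod_self, ← hclose, ← h']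
      exact ha.2
  · intro a ha b hb hab
    simp only [Finset.mem_filter, Finset.mem_range] at ha hb
    rcases lt_or_eq_of_le (Nat.succ_le_of_lt ha.1) with h1 | h1 <;>
      rcases lt_or_eq_of_le (Nat.succ_le_of_lt hb.1) with h2 | h2
    · rw [Nat.mod_eq_of_lt h1, Nat.mod_eq_of_lt h2] at hab; omega
    · rw [Nat.mod_eq_of_lt h1, ← h2, Nat.mod_self] at hab; omega
    · rw [Nat.mod_eq_of_lt h2, ← h1, Nat.mod_self] at hab; omega
    · omega
  · intro b hb
    simp only [Finset.mem_filter, Finset.mem_range] at hb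
    rcases Nat.eq_zero_or_pos b with rfl | hbpos
    · refine ⟨τ - 1, ?_, ?_⟩
      · simp only [Finset.mem_filter, Finset.mem_range]
        constructor
        · omega
        · have : τ - 1 + 1 = τ := by omega
          rw [this, hclose]; exact hb.2
      · have : τ - 1 + 1 = τ := by omega
        rw [this, Nat.mod_self]
    · refine ⟨b - 1, ?_, ?_⟩
      · simp only [Finset.mem_filter, Finset.mem_range]
        have : b - 1 + 1 = b := by omega
        rw [this]; exact ⟨by omega, hb.2⟩
      · have : b - 1 + 1 = b := by omega
        rw [this, Nat.mod_eq_of_lt hb.1]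

/-- In a set of edges where every edge has a successor, there is a circuit. -/
lemma exists_circuit_in_set {ι : Type*} [Fintype ι] [DecidableEq ι]
    (S : Finset (ι × ι)) (hne : S.Nonempty)
    (hsucc : ∀ e ∈ S, ∃ e' ∈ S, e'.1 = e.2) :
    ∃ (τ : ℕ) (w : ℕ → ι), 1 ≤ τ ∧ w τ = w 0 ∧
      (∀ i < τ, (w i, w (i + 1)) ∈ S) ∧
      (∀ i < τ, ∀ j < τ, (w i, w (i + 1)) = (w j, w (j + 1)) → i = j) := by
  classical
  obtain ⟨e₀, he₀⟩ := hne
  set nxt : ι × ι → ι × ι := fun e =>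
    if h : ∃ e' ∈ S, e'.1 = e.2 then h.choose else e with hnxtdef
  have hnxt_mem : ∀ e ∈ S, nxt e ∈ S ∧ (nxt e).1 = e.2 := by
    intro e he
    have h := hsucc e he
    simp only [hnxtdef, dif_pos h]
    exact ⟨h.choose_spec.1, h.choose_spec.2⟩
  set g : ℕ → ι × ι := fun n => nxt^[n] e₀ with hgdef
  have hgS : ∀ n, g n ∈ S := by
    intro n; induction n with
    | zero => exact he₀
    | succ n ih =>
        have : g (n + 1) = nxt (g n) := Function.iterate_succ_apply' _ _ _
        rw [this]; exact (hnxt_mem _ ih).1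
  have hchain : ∀ n, (g (n + 1)).1 = (g n).2 := by
    intro n
    have : g (n + 1) = nxt (g n) := Function.iterate_succ_apply' _ _ _
    rw [this]; exact (hnxt_mem _ (hgS n)).2
  set v : ℕ → ι := fun n => (g n).1 with hvdef
  have hrep : ∃ n, 0 < n ∧ ∃ m < n, v m = v n := by
    have hni : ¬ Function.Injective v := by
      intro hinj
      exact (Finite.of_injective v hinj).false
    simp only [Function.Injective, not_forall] at hni
    obtain ⟨a, b, hab, hne'⟩ := hni
    rcases Nat.lt_or_ge a b with h | h
    · exact ⟨b, by omega, a, h, hab⟩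
    · have : b < a := by omega
      exact ⟨a, by omega, b, this, hab.symm⟩
  set n₀ := Nat.find hrep with hn₀def
  have hn₀ : 0 < n₀ ∧ ∃ m < n₀, v m = v n₀ := Nat.find_spec hrep
  obtain ⟨m, hmn, hvm⟩ := hn₀.2
  have hinj : ∀ a < n₀, ∀ b < n₀, v a = v b → a = b := by
    intro a ha b hb hab
    by_contra hne'
    rcases Nat.lt_or_ge a b with h | h
    · exact Nat.find_min hrep hb ⟨by omega, a, h, hab⟩
    · have h' : b < a := by omega
      exact Nat.find_min hrep ha ⟨by omega, b, h', hab.symm⟩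
  refine ⟨n₀ - m, fun i => v (m + i), by omega, ?_, ?_, ?_⟩
  · show v (m + (n₀ - m)) = v (m + 0)
    have : m + (n₀ - m) = n₀ := by omega
    rw [this]
    simpa using hvm.symm
  · intro i hi
    have hedge : (v (m + i), v (m + i + 1)) = g (m + i) := by
      apply Prod.ext
      · rfl
      · show v (m + i + 1) = (g (m + i)).2
        exact hchain (m + i)
    show (v (m + i), v (m + (i + 1))) ∈ S
    have : m + (i + 1) = m + i + 1 := by omega
    rw [this, hedge]
    exact hgS (m + i)
  · intro i hi j hj heq
    have h1 : v (m + i) = v (m + j) := (Prod.ext_iff.mp heq).1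
    have := hinj (m + i) (by omega) (m + j) (by omega) h1
    omega

lemma kappa_eq {ι : Type*} [DecidableEq ι] (E : Finset (ι × ι)) (τ : ℕ) (w : ℕ → ι)
    (hE : ∀ i < τ, (w i, w (i + 1)) ∈ E) (j : ι) :
    ((Finset.range τ).filter (fun i => w i = j)).card
      = ∑ e ∈ E.filter (fun e => e.1 = j),
          ((Finset.range τ).filter (fun i => (w i, w (i + 1)) = e)).card := by
  simp only [Finset.card_filter]
  rw [Finset.sum_comm]
  apply Finset.sum_congr rfl
  intro i hi
  rw [Finset.mem_range] at hi
  rw [Finset.sum_ite_eq (E.filter (fun e => e.1 = j)) (w i, w (i + 1)) (fun _ => 1)]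
  by_cases h : w i = j
  · rw [if_pos h, if_pos (Finset.mem_filter.mpr ⟨hE i hi, h⟩)]
  · rw [if_neg h, if_neg]
    intro hmem
    exact h (Finset.mem_filter.mp hmem).2

lemma kappa_eq2 {ι : Type*} [DecidableEq ι] (E : Finset (ι × ι)) (τ : ℕ) (w : ℕ → ι)
    (hE : ∀ i < τ, (w i, w (i + 1)) ∈ E) (j : ι) :
    ((Finset.range τ).filter (fun i => w (i + 1) = j)).card
      = ∑ e ∈ E.filter (fun e => e.2 = j),
          ((Finset.range τ).filter (fun i => (w i, w (i + 1)) = e)).card := by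
  simp only [Finset.card_filter]
  rw [Finset.sum_comm]
  apply Finset.sum_congr rfl
  intro i hi
  rw [Finset.mem_range] at hi
  rw [Finset.sum_ite_eq (E.filter (fun e => e.2 = j)) (w i, w (i + 1)) (fun _ => 1)]
  by_cases h : w (i + 1) = j
  · rw [if_pos h, if_pos (Finset.mem_filter.mpr ⟨hE i hi, h⟩)]
  · rw [if_neg h, if_neg]
    intro hmem
    exact h (Finset.mem_filter.mp hmem).2

lemma rho_indicator {ι : Type*} [DecidableEq ι] (τ : ℕ) (w : ℕ → ι)
    (hdist : ∀ i < τ, ∀ j < τ, (w i, w (i + 1)) = (w j, w (j + 1)) → i = j)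
    (e : ι × ι) :
    (((Finset.range τ).filter (fun i => (w i, w (i + 1)) = e)).card : ℕ)
      = if e ∈ (Finset.range τ).image (fun i => (w i, w (i + 1))) then 1 else 0 := by
  by_cases h : e ∈ (Finset.range τ).image (fun i => (w i, w (i + 1)))
  · rw [if_pos h]
    obtain ⟨i₀, hi₀, hei⟩ := Finset.mem_image.mp h
    rw [Finset.mem_range] at hi₀
    have : (Finset.range τ).filter (fun i => (w i, w (i + 1)) = e) = {i₀} := by
      apply Finset.ext
      intro a
      simp only [Finset.mem_filter, Finset.mem_range, Finset.mem_singleton]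
      constructor
      · rintro ⟨ha, hae⟩
        exact hdist a ha i₀ hi₀ (hae.trans hei.symm)
      · rintro rfl
        exact ⟨hi₀, hei⟩
    rw [this, Finset.card_singleton]
  · rw [if_neg h]
    rw [Finset.card_eq_zero, Finset.filter_eq_empty_iff]
    intro a ha hae
    exact h (Finset.mem_image.mpr ⟨a, ha, hae⟩)

lemma fiber_sum {ι : Type*} [DecidableEq ι] (E : Finset (ι × ι)) (s : Finset ι)
    (wj : ι → ℝ) (x : ι × ι → ℝ) :
    ∑ j ∈ s, wj j * ∑ e ∈ E.filter (fun e => e.1 = j), x e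
      = ∑ e ∈ E, (if e.1 ∈ s then wj e.1 else 0) * x e := by
  have step1 : ∀ j ∈ s, wj j * ∑ e ∈ E.filter (fun e => e.1 = j), x e
      = ∑ e ∈ E, if e.1 = j then wj e.1 * x e else 0 := by
    intro j _
    rw [Finset.mul_sum, ← Finset.sum_filter]
    apply Finset.sum_congr rfl
    intro e he
    rw [(Finset.mem_filter.mp he).2]
  rw [Finset.sum_congr rfl step1, Finset.sum_comm]
  apply Finset.sum_congr rfl
  intro e _
  rw [Finset.sum_ite_eq s e.1 (fun _ => wj e.1 * x e)]
  by_cases h : e.1 ∈ s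
  · rw [if_pos h, if_pos h]
  · rw [if_neg h, if_neg h, zero_mul]

lemma cost_identity {ι : Type*} [DecidableEq ι] (E : Finset (ι × ι)) (AS U : Finset ι)
    (wE : ι × ι → ℝ) (wAS wU : ι → ℝ) (x : ι × ι → ℝ) :
    ∑ e ∈ E, (wE e + (if e.1 ∈ U then wU e.1 else 0) - (if e.1 ∈ AS then wAS e.1 else 0)) * x e
      = ∑ e ∈ E, wE e * x e
        + ∑ j ∈ U, wU j * ∑ e ∈ E.filter (fun e => e.1 = j), x e
        - ∑ j ∈ AS, wAS j * ∑ e ∈ E.filter (fun e => e.1 = j), x e := by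
  rw [fiber_sum E U wU x, fiber_sum E AS wAS x]
  rw [← Finset.sum_add_distrib, ← Finset.sum_sub_distrib]
  apply Finset.sum_congr rfl
  intro e _
  ring

lemma core_decomp {ι : Type*} [Fintype ι] [DecidableEq ι] (E : Finset (ι × ι)) (c : ι × ι → ℝ) :
    ∀ N : ℕ, ∀ f : ι × ι → ℝ,
      (E.filter (fun e => 0 < f e)).card ≤ N →
      (∀ v, ∑ e ∈ E.filter (fun e => e.1 = v), f e
          = ∑ e ∈ E.filter (fun e => e.2 = v), f e) →
      (∀ e ∈ E, 0 ≤ f e) →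
      ∑ e ∈ E, c e * f e < 0 →
      ∃ (τ : ℕ) (w : ℕ → ι), 1 ≤ τ ∧ w τ = w 0 ∧
        (∀ i < τ, (w i, w (i + 1)) ∈ E) ∧
        (∀ i < τ, ∀ j < τ, (w i, w (i + 1)) = (w j, w (j + 1)) → i = j) ∧
        ∑ e ∈ E, c e *
          (((Finset.range τ).filter fun i => (w i, w (i + 1)) = e).card : ℝ) < 0 := by
  intro N
  induction N with
  | zero =>
      intro f hcard hcons hnn hneg
      exfalso
      have hemp : E.filter (fun e => 0 < f e) = ∅ :=
        Finset.card_eq_zero.mp (Nat.le_zero.mp hcard)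
      have hzero : ∀ e ∈ E, f e = 0 := by
        intro e he
        by_contra h
        have hpos : 0 < f e := lt_of_le_of_ne (hnn e he) (Ne.symm h)
        have : e ∈ E.filter (fun e => 0 < f e) := Finset.mem_filter.mpr ⟨he, hpos⟩
        rw [hemp] at this
        exact absurd this (Finset.notMem_empty e)
      have : ∑ e ∈ E, c e * f e = 0 :=
        Finset.sum_eq_zero (fun e he => by rw [hzero e he, mul_zero])
      linarith
  | succ N ih =>
      intro f hcard hcons hnn hneg
      set S := E.filter (fun e => 0 < f e) with hSdef
      have hSsub : S ⊆ E := Finset.filter_subset _ _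
      have hSne : S.Nonempty := by
        rw [Finset.nonempty_iff_ne_empty]
        intro hemp
        have hzero : ∀ e ∈ E, f e = 0 := by
          intro e he
          by_contra h
          have hpos : 0 < f e := lt_of_le_of_ne (hnn e he) (Ne.symm h)
          have : e ∈ S := Finset.mem_filter.mpr ⟨he, hpos⟩
          rw [hemp] at this
          exact absurd this (Finset.notMem_empty e)
        have : ∑ e ∈ E, c e * f e = 0 :=
          Finset.sum_eq_zero (fun e he => by rw [hzero e he, mul_zero])
        linarith
      have hsucc : ∀ e ∈ S, ∃ e' ∈ S, e'.1 = e.2 := by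
        intro e heS
        obtain ⟨heE, hfe⟩ := Finset.mem_filter.mp heS
        have hin : f e ≤ ∑ e' ∈ E.filter (fun e' => e'.2 = e.2), f e' :=
          Finset.single_le_sum (fun e' he' => hnn e' (Finset.mem_filter.mp he').1)
            (Finset.mem_filter.mpr ⟨heE, rfl⟩)
        have hout : 0 < ∑ e' ∈ E.filter (fun e' => e'.1 = e.2), f e' := by
          rw [hcons e.2]; linarith
        by_contra hno
        push_neg at hno
        have hle : ∑ e' ∈ E.filter (fun e' => e'.1 = e.2), f e' ≤ 0 := by
          apply Finset.sum_nonpos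
          intro e' he'
          obtain ⟨he'E, he'1⟩ := Finset.mem_filter.mp he'
          by_contra hpos
          push_neg at hpos
          exact hno e' (Finset.mem_filter.mpr ⟨he'E, hpos⟩) he'1
        linarith
      obtain ⟨τ, w, hτ, hclose, hmemS, hdist⟩ := exists_circuit_in_set S hSne hsucc
      have hmemE : ∀ i < τ, (w i, w (i + 1)) ∈ E := fun i hi => hSsub (hmemS i hi)
      set Cset := (Finset.range τ).image (fun i => (w i, w (i + 1))) with hCdef
      have hCS : Cset ⊆ S := by
        intro e he
        obtain ⟨i, hi, rfl⟩ := Finset.mem_image.mp he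
        exact hmemS i (Finset.mem_range.mp hi)
      have hCne : Cset.Nonempty :=
        ⟨(w 0, w 1), Finset.mem_image.mpr ⟨0, Finset.mem_range.mpr (by omega), rfl⟩⟩
      obtain ⟨estar, hestarC, hmin⟩ := Finset.exists_min_image Cset f hCne
      have hα : 0 < f estar := (Finset.mem_filter.mp (hCS hestarC)).2
      -- real-valued edge-traversal counts
      set rr : ι × ι → ℝ :=
        fun e => (((Finset.range τ).filter fun i => (w i, w (i + 1)) = e).card : ℝ) with hrrdef
      have hrr : ∀ e, rr e = if e ∈ Cset then 1 else 0 := by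
        intro e
        rw [hrrdef]
        simp only
        rw [rho_indicator τ w hdist e]
        split <;> simp
      by_cases hgood : ∑ e ∈ E, c e * rr e < 0
      · exact ⟨τ, w, hτ, hclose, hmemE, hdist, hgood⟩
      push_neg at hgood
      -- subtract the circuit from the circulation
      set f' : ι × ι → ℝ := fun e => f e - f estar * (if e ∈ Cset then 1 else 0) with hf'def
      have hsub : ∀ (T : Finset (ι × ι)), ∑ e ∈ T, f' e
          = ∑ e ∈ T, f e - f estar * ∑ e ∈ T, rr e := by
        intro T
        rw [Finset.mul_sum, ← Finset.sum_sub_distrib]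
        apply Finset.sum_congr rfl
        intro e _
        rw [hf'def, hrr e]
      -- counts over out/in fibers
      have hfib1 : ∀ v, ∑ e ∈ E.filter (fun e => e.1 = v), rr e
          = (((Finset.range τ).filter fun i => w i = v).card : ℝ) := by
        intro v
        rw [kappa_eq E τ w hmemE v]
        push_cast
        rfl
      have hfib2 : ∀ v, ∑ e ∈ E.filter (fun e => e.2 = v), rr e
          = (((Finset.range τ).filter fun i => w (i + 1) = v).card : ℝ) := by
        intro v
        rw [kappa_eq2 E τ w hmemE v]
        push_cast
        rfl
      have hcons' : ∀ v, ∑ e ∈ E.filter (fun e => e.1 = v), f' e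
          = ∑ e ∈ E.filter (fun e => e.2 = v), f' e := by
        intro v
        rw [hsub, hsub, hcons v, hfib1 v, hfib2 v, shift_card τ hτ w hclose v]
      have hnn' : ∀ e ∈ E, 0 ≤ f' e := by
        intro e he
        show 0 ≤ f e - f estar * (if e ∈ Cset then 1 else 0)
        by_cases h : e ∈ Cset
        · rw [if_pos h, mul_one]
          have := hmin e h
          linarith
        · rw [if_neg h, mul_zero]
          have := hnn e he
          linarith
      have hneg' : ∑ e ∈ E, c e * f' e < 0 := by
        have heq : ∑ e ∈ E, c e * f' e
            = ∑ e ∈ E, c e * f e - f estar * ∑ e ∈ E, c e * rr e := by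
          rw [Finset.mul_sum, ← Finset.sum_sub_distrib]
          apply Finset.sum_congr rfl
          intro e _
          rw [hf'def, hrr e]
          ring
        rw [heq]
        nlinarith
      have hcard' : (E.filter (fun e => 0 < f' e)).card ≤ N := by
        have hsub' : E.filter (fun e => 0 < f' e) ⊆ S.erase estar := by
          intro e he
          obtain ⟨heE, hepos⟩ := Finset.mem_filter.mp he
          have hle : f' e ≤ f e := by
            show f e - f estar * (if e ∈ Cset then 1 else 0) ≤ f e
            by_cases h : e ∈ Cset
            · rw [if_pos h, mul_one]; linarith
            · rw [if_neg h, mul_zero]; linarith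
          refine Finset.mem_erase.mpr ⟨?_, Finset.mem_filter.mpr ⟨heE, by linarith⟩⟩
          intro hee
          rw [hee] at hepos
          rw [hf'def] at hepos
          simp only [if_pos hestarC, mul_one, sub_self] at hepos
          exact lt_irrefl 0 hepos
        calc (E.filter (fun e => 0 < f' e)).card ≤ (S.erase estar).card :=
              Finset.card_le_card hsub'
          _ = S.card - 1 := Finset.card_erase_of_mem (hCS hestarC)
          _ ≤ N := by omega
      exact ih f' hcard' hcons' hnn' hneg'

/-- Feasibility of the circulation linear program implies the existence of a circuit
(closed walk with pairwise distinct traversed edges) on `G(𝒫,E)` satisfying the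
weighted inequality
`Σ_{(k,ℓ)∈E} (ln μ_{kℓ}) ρ_{kℓ}(W) + Σ_{j∈𝒫_U} (ln λ_j) κ_j(W) < Σ_{j∈𝒫_AS} |ln λ_j| κ_j(W)`.
Here `wE (k,ℓ)` stands for `ln μ_{kℓ}`, `wU j` for `ln λ_j > 0` (`j ∈ 𝒫_U`), and
`wAS j` for `|ln λ_j| > 0` (`j ∈ 𝒫_AS`). -/
theorem feasible_circulation_implies_good_circuit
    {ι : Type*} [Fintype ι] [DecidableEq ι]
    (E : Finset (ι × ι)) (AS U : Finset ι) (hASU : Disjoint AS U)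
    (wE : ι × ι → ℝ) (wAS wU : ι → ℝ)
    (hwAS : ∀ j ∈ AS, 0 < wAS j) (hwU : ∀ j ∈ U, 0 < wU j)
    (f : ι × ι → ℝ)
    (hcons : ∀ v : ι,
      ∑ e ∈ E.filter (fun e => e.1 = v), f e = ∑ e ∈ E.filter (fun e => e.2 = v), f e)
    (hbounds : ∀ e ∈ E, 0 ≤ f e ∧ f e ≤ 1)
    (hnontriv : 1 ≤ ∑ e ∈ E, f e)
    (hineq : ∑ e ∈ E, wE e * f e
        + ∑ j ∈ U, wU j * ∑ e ∈ E.filter (fun e => e.1 = j), f e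
      < ∑ j ∈ AS, wAS j * ∑ e ∈ E.filter (fun e => e.1 = j), f e) :
    ∃ (τ : ℕ) (w : ℕ → ι), 1 ≤ τ ∧ w τ = w 0 ∧
      (∀ i < τ, (w i, w (i + 1)) ∈ E) ∧
      (∀ i < τ, ∀ j < τ, (w i, w (i + 1)) = (w j, w (j + 1)) → i = j) ∧
      ∑ e ∈ E, wE e *
          (((Finset.range τ).filter fun i => (w i, w (i + 1)) = e).card : ℝ)
        + ∑ j ∈ U, wU j * (((Finset.range τ).filter fun i => w i = j).card : ℝ)
      < ∑ j ∈ AS, wAS j * (((Finset.range τ).filter fun i => w i = j).card : ℝ) := by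
  
  classical
  set c : ι × ι → ℝ := fun e =>
    wE e + (if e.1 ∈ U then wU e.1 else 0) - (if e.1 ∈ AS then wAS e.1 else 0) with hcdef
  have hcf : ∑ e ∈ E, c e * f e < 0 := by
    have key := cost_identity E AS U wE wAS wU f
    have : ∑ e ∈ E, c e * f e
        = ∑ e ∈ E, (wE e + (if e.1 ∈ U then wU e.1 else 0)
            - (if e.1 ∈ AS then wAS e.1 else 0)) * f e := rfl
    rw [this, key]
    linarith
  obtain ⟨τ, w, hτ, hclose, hmem, hdist, hlt⟩ :=
    core_decomp E c E.card f
      (Finset.card_le_card (Finset.filter_subset _ _)) hcons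
      (fun e he => (hbounds e he).1) hcf
  refine ⟨τ, w, hτ, hclose, hmem, hdist, ?_⟩
  have hfib : ∀ j : ι, ∑ e ∈ E.filter (fun e => e.1 = j),
      (((Finset.range τ).filter fun i => (w i, w (i + 1)) = e).card : ℝ)
      = (((Finset.range τ).filter fun i => w i = j).card : ℝ) := by
    intro j
    rw [kappa_eq E τ w hmem j]
    push_cast
    rfl
  have key := cost_identity E AS U wE wAS wU
    (fun e => (((Finset.range τ).filter fun i => (w i, w (i + 1)) = e).card : ℝ))
  have hU' : ∑ j ∈ U, wU j * ∑ e ∈ E.filter (fun e => e.1 = j),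
      (((Finset.range τ).filter fun i => (w i, w (i + 1)) = e).card : ℝ)
      = ∑ j ∈ U, wU j * (((Finset.range τ).filter fun i => w i = j).card : ℝ) :=
    Finset.sum_congr rfl (fun j _ => by rw [hfib j])
  have hAS' : ∑ j ∈ AS, wAS j * ∑ e ∈ E.filter (fun e => e.1 = j),
      (((Finset.range τ).filter fun i => (w i, w (i + 1)) = e).card : ℝ)
      = ∑ j ∈ AS, wAS j * (((Finset.range τ).filter fun i => w i = j).card : ℝ) :=
    Finset.sum_congr rfl (fun j _ => by rw [hfib j])
  rw [hU', hAS'] at key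
  have hlt' : ∑ e ∈ E, c e *
      (((Finset.range τ).filter fun i => (w i, w (i + 1)) = e).card : ℝ) < 0 := hlt
  have : ∑ e ∈ E, c e *
      (((Finset.range τ).filter fun i => (w i, w (i + 1)) = e).card : ℝ)
      = ∑ e ∈ E, (wE e + (if e.1 ∈ U then wU e.1 else 0)
          - (if e.1 ∈ AS then wAS e.1 else 0)) *
        (((Finset.range τ).filter fun i => (w i, w (i + 1)) = e).card : ℝ) := rfl
  rw [this, key] at hlt'
  linarith
end
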